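/- arXiv:math/0401117 — 3 statements merged into one kernel-verified Lean document; each statement's English description precedes it below -/
import Mathlib

section
/- Let D be an SQS(2^d) with d ≥ 3, and suppose G ≤ Aut(D) contains a regular normal subgroup T that is elementary abelian of order 2^d. If G acts flag-transitively on D and |G_0| is odd (where 0 is a point and G_0 its stabilizer), then every block of D is an orbit of some subgroup of T of order 4; identifying points with elements of T, every block is a coset of a 2-dimensional subspace, so D is the design of points and planes of AG(d,2). -/
/-- Let `D` be an `SQS(2^d)` with `d ≥ 3`, and suppose `G ≤ Aut(D)` contains a regular
normal subgroup `T` which is elementary abelian of order `2^d`. If `G` acts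
flag-transitively on `D` and the stabilizer of a point has odd order, then every block
of `D` is an orbit of a subgroup of `T` of order 4 (hence, identifying the points with
the elements of `T`, every block is a plane of `AG(d,2)`). -/
theorem stmt_5 {X : Type*} [Fintype X] [DecidableEq X]
    (d : ℕ) (hd : 3 ≤ d) (hX : Fintype.card X = 2 ^ d)
    (B : Finset (Finset X))
    (hsize : ∀ b ∈ B, b.card = 4)
    (hsteiner : ∀ T : Finset X, T.card = 3 → ∃! b, b ∈ B ∧ T ⊆ b)
    (G : Subgroup (Equiv.Perm X))
    (hAut : ∀ g ∈ G, ∀ b ∈ B, b.image g ∈ B)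
    (hflag : ∀ (x y : X) (b c : Finset X), b ∈ B → c ∈ B → x ∈ b → y ∈ c →
      ∃ g ∈ G, g x = y ∧ b.image g = c)
    (T : Subgroup (Equiv.Perm X)) (hTG : T ≤ G)
    (hTnorm : ∀ g ∈ G, ∀ t ∈ T, g * t * g⁻¹ ∈ T)
    (hTtrans : ∀ x y : X, ∃ t ∈ T, t x = y)
    (hTregular : ∀ t ∈ T, (∃ x : X, t x = x) → t = 1)
    (hTelem : ∀ t ∈ T, t * t = 1)
    (hTcard : Nat.card T = 2 ^ d)
    (x₀ : X)
    (hodd : Odd (Nat.card ↥(G ⊓ MulAction.stabilizer (Equiv.Perm X) x₀))) :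
    ∀ b ∈ B, ∃ S : Subgroup (Equiv.Perm X), S ≤ T ∧ Nat.card S = 4 ∧
      ∃ x : X, (↑b : Set X) = MulAction.orbit S x := by
  classical
  -- Step A : |G| = 2^d * |G₀|
  have horbit_univ : MulAction.orbit G x₀ = Set.univ := by
    ext y
    simp only [Set.mem_univ, iff_true]
    obtain ⟨t, htT, hty⟩ := hTtrans x₀ y
    exact ⟨⟨t, hTG htT⟩, hty⟩
  have hstabeq : MulAction.stabilizer G x₀
      = (G ⊓ MulAction.stabilizer (Equiv.Perm X) x₀).subgroupOf G := by
    ext g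
    simp [MulAction.mem_stabilizer_iff, Subgroup.mem_subgroupOf, Subgroup.smul_def]
  have hGcard : Nat.card G
      = 2 ^ d * Nat.card ↥(G ⊓ MulAction.stabilizer (Equiv.Perm X) x₀) := by
    have h1 : Nat.card (MulAction.orbit G x₀) * Nat.card (MulAction.stabilizer G x₀)
        = Nat.card G := by
      simp only [Nat.card_eq_fintype_card]
      exact MulAction.card_orbit_mul_card_stabilizer_eq_card_group G x₀
    rw [horbit_univ] at h1
    have h2 : Nat.card (Set.univ : Set X) = 2 ^ d := by
      rw [Nat.card_coe_set_eq, Set.ncard_univ, Nat.card_eq_fintype_card, hX]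
    have h3 : Nat.card (MulAction.stabilizer G x₀)
        = Nat.card ↥(G ⊓ MulAction.stabilizer (Equiv.Perm X) x₀) := by
      rw [hstabeq]
      exact Nat.card_congr (Subgroup.subgroupOfEquivOfLe inf_le_left).toEquiv
    rw [← h1, h3, h2]
  -- Step B : the quotient G / T has odd order
  set T' : Subgroup G := T.subgroupOf G with hT'
  haveI hT'norm : T'.Normal := by
    constructor
    intro n hn g
    simp only [hT', Subgroup.mem_subgroupOf] at hn ⊢
    exact hTnorm g g.2 n hn
  have hT'card : Nat.card T' = 2 ^ d := by
    rw [← hTcard]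
    exact Nat.card_congr (Subgroup.subgroupOfEquivOfLe hTG).toEquiv
  have hquotodd : Odd (Nat.card (G ⧸ T')) := by
    have := Subgroup.card_eq_card_quotient_mul_card_subgroup T'
    rw [hGcard, hT'card] at this
    have h2 : Nat.card (G ⧸ T')
        = Nat.card ↥(G ⊓ MulAction.stabilizer (Equiv.Perm X) x₀) := by
      have hpos : 0 < 2 ^ d := Nat.pow_pos (by norm_num)
      nlinarith [this]
    rw [h2]; exact hodd
  -- Step C : any element of G of order dividing 4 lies in T
  have key : ∀ g : Equiv.Perm X, g ∈ G → g ^ 4 = 1 → g ∈ T := by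
    intro g hgG hg4
    set gg : G := ⟨g, hgG⟩ with hgg
    have h4 : (QuotientGroup.mk gg : G ⧸ T') ^ 4 = 1 := by
      rw [← QuotientGroup.mk_pow]
      have : gg ^ 4 = 1 := by
        apply Subtype.ext
        simp [hgg, hg4]
      rw [this]; rfl
    have hodd' : (QuotientGroup.mk gg : G ⧸ T') ^ Nat.card (G ⧸ T') = 1 :=
      pow_card_eq_one'
    have hord4 : orderOf (QuotientGroup.mk gg : G ⧸ T') ∣ 4 := orderOf_dvd_of_pow_eq_one h4
    have hordodd : orderOf (QuotientGroup.mk gg : G ⧸ T') ∣ Nat.card (G ⧸ T') :=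
      orderOf_dvd_of_pow_eq_one hodd'
    have hcop : Nat.Coprime 4 (Nat.card (G ⧸ T')) := by
      obtain ⟨m, hm⟩ := hquotodd
      have : ¬ (2 ∣ Nat.card (G ⧸ T')) := by omega
      have h4eq : (4 : ℕ) = 2 ^ 2 := by norm_num
      rw [h4eq]
      exact (Nat.Prime.coprime_iff_not_dvd Nat.prime_two).2 this |>.pow_left 2
    have h1 : orderOf (QuotientGroup.mk gg : G ⧸ T') = 1 :=
      Nat.eq_one_of_dvd_coprimes hcop hord4 hordodd
    have : (QuotientGroup.mk gg : G ⧸ T') = 1 := orderOf_eq_one_iff.mp h1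
    have hmem : gg ∈ T' := (QuotientGroup.eq_one_iff gg).mp this
    simpa [hT', Subgroup.mem_subgroupOf] using hmem
  -- Main part
  intro b hb
  have hb4 := hsize b hb
  -- block stabilizer H
  set H : Subgroup (Equiv.Perm X) :=
    { carrier := {g | g ∈ G ∧ b.image g = b}
      one_mem' := ⟨G.one_mem, by simp⟩
      mul_mem' := by
        rintro g h ⟨hg, hgb⟩ ⟨hh, hhb⟩
        refine ⟨G.mul_mem hg hh, ?_⟩
        have : b.image ⇑(g * h) = (b.image ⇑h).image ⇑g := by
          rw [Finset.image_image]; rfl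
        rw [this, hhb, hgb]
      inv_mem' := by
        rintro g ⟨hg, hgb⟩
        refine ⟨G.inv_mem hg, ?_⟩
        conv_lhs => rw [← hgb]
        rw [Finset.image_image]
        have : (⇑g⁻¹ ∘ ⇑g) = id := by ext x; simp
        rw [this, Finset.image_id] } with hH
  have hbne : b.Nonempty := Finset.card_pos.mp (by omega)
  obtain ⟨x, hx⟩ := hbne
  -- orbit of x under H is b
  have horbH : MulAction.orbit H x = (↑b : Set X) := by
    ext y
    constructor
    · rintro ⟨g, rfl⟩
      have hgb : b.image ⇑(g : Equiv.Perm X) = b := g.2.2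
      have : (g : Equiv.Perm X) x ∈ b.image ⇑(g : Equiv.Perm X) :=
        Finset.mem_image_of_mem _ hx
      rw [hgb] at this
      simpa [Subgroup.smul_def] using this
    · intro hy
      obtain ⟨g, hgG, hgx, hgb⟩ := hflag x y b b hb hb hx hy
      exact ⟨⟨g, hgG, hgb⟩, by simpa [Subgroup.smul_def] using hgx⟩
  have hcardorbH : Nat.card (MulAction.orbit H x) = 4 := by
    rw [horbH]
    simp [Nat.card_eq_fintype_card, hb4]
  have h4dvd : 4 ∣ Nat.card H := by
    have h1 : Nat.card (MulAction.orbit H x) * Nat.card (MulAction.stabilizer H x)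
        = Nat.card H := by
      simp only [Nat.card_eq_fintype_card]
      exact MulAction.card_orbit_mul_card_stabilizer_eq_card_group H x
    rw [hcardorbH] at h1
    exact ⟨_, h1.symm⟩
  -- subgroup of order 4
  haveI : Fact (Nat.Prime 2) := ⟨Nat.prime_two⟩
  have h4eq : (4 : ℕ) = 2 ^ 2 := by norm_num
  obtain ⟨K, hK⟩ := Sylow.exists_subgroup_card_pow_prime (G := H) 2 (n := 2)
    (by rw [← h4eq]; exact h4dvd)
  set S : Subgroup (Equiv.Perm X) := K.map H.subtype with hS
  have hScard : Nat.card S = 4 := by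
    rw [hS, h4eq, ← hK]
    exact (Nat.card_congr (Subgroup.equivMapOfInjective K H.subtype
      H.subtype_injective).toEquiv).symm
  have hSH : S ≤ H := by
    rintro s hs
    obtain ⟨k, hk, rfl⟩ := hs
    exact (k : H).2
  have hST : S ≤ T := by
    intro s hs
    have hsG : s ∈ G := (hSH hs).1
    have hs4 : s ^ 4 = 1 := by
      have : (⟨s, hs⟩ : S) ^ 4 = 1 := by
        rw [← hScard]; exact pow_card_eq_one'
      simpa using congrArg (Subtype.val) this
    exact key s hsG hs4
  refine ⟨S, hST, hScard, x, ?_⟩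
  -- b = orbit S x
  have hsub : MulAction.orbit S x ⊆ (↑b : Set X) := by
    rintro _ ⟨g, rfl⟩
    have hgb : b.image ⇑(g : Equiv.Perm X) = b := (hSH g.2).2
    have : (g : Equiv.Perm X) x ∈ b.image ⇑(g : Equiv.Perm X) :=
      Finset.mem_image_of_mem _ hx
    rw [hgb] at this
    simpa [Subgroup.smul_def] using this
  have hstabS : MulAction.stabilizer S x = ⊥ := by
    ext g
    simp only [MulAction.mem_stabilizer_iff, Subgroup.mem_bot]
    constructor
    · intro hgx
      have : (g : Equiv.Perm X) = 1 := by
        apply hTregular _ (hST g.2)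
        exact ⟨x, by simpa [Subgroup.smul_def] using hgx⟩
      exact Subtype.ext this
    · rintro rfl; simp
  have hcardorbS : Nat.card (MulAction.orbit S x) = 4 := by
    have h1 : Nat.card (MulAction.orbit S x) * Nat.card (MulAction.stabilizer S x)
        = Nat.card S := by
      simp only [Nat.card_eq_fintype_card]
      exact MulAction.card_orbit_mul_card_stabilizer_eq_card_group S x
    rw [hstabS, hScard] at h1
    simpa using h1
  have : MulAction.orbit S x = (↑b : Set X) := by
    apply Set.eq_of_subset_of_ncard_le hsub
    rw [Set.ncard_coe_finset, hb4, ← hcardorbS, Nat.card_coe_set_eq]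
  exact this.symm
end

section
/- If d ≥ 3 is an integer such that (2^d - 1)(2^{d-1} - 1)/3 divides d(2^d - 1), then d = 3 or d = 5. -/
/-! For `d ≥ 6` the quotient `(2^d - 1)(2^(d-1) - 1)/3` already exceeds `d (2^d - 1)`, because
`2^(d-1)` outgrows `3d`; so divisibility forces `d ≤ 5`, and of `3, 4, 5` only `d = 4` fails. -/

theorem three_mul_add_seven_le_two_pow {n : ℕ} (hn : 5 ≤ n) : 3 * n + 7 ≤ 2 ^ n := by
  induction n, hn using Nat.le_induction with
  | base => norm_num
  | succ n _ ih => rw [pow_succ]; omega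

theorem lt_mul_succ_of_mul_div_dvd_mul {a b d k : ℕ} (ha : 0 < a) (hd : 0 < d) (hk : 0 < k)
    (h : a * b / k ∣ d * a) : b < k * (d + 1) := by
  have hquot : a * b / k ≤ d * a := Nat.le_of_dvd (by positivity) h
  have hab : a * b < a * (k * (d + 1)) :=
    calc a * b < k * (a * b / k + 1) := Nat.lt_mul_div_succ _ hk
      _ ≤ k * (d * a + 1) := by gcongr
      _ ≤ a * (k * (d + 1)) := by nlinarith
  exact Nat.lt_of_mul_lt_mul_left hab

/-- If `d ≥ 3` is an integer such that `(2^d - 1)(2^{d-1} - 1)/3` divides `d(2^d - 1)`,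
then `d = 3` or `d = 5`. -/
theorem stmt_6 (d : ℕ) (hd : 3 ≤ d)
    (hdvd : (2 ^ d - 1) * (2 ^ (d - 1) - 1) / 3 ∣ d * (2 ^ d - 1)) :
    d = 3 ∨ d = 5 := by
  have hle : d ≤ 5 := by
    by_contra! hgt
    have hpos : 0 < 2 ^ d - 1 := Nat.sub_pos_of_lt (Nat.one_lt_two_pow (by omega))
    have hsmall := lt_mul_succ_of_mul_div_dvd_mul hpos (by omega) three_pos hdvd
    have hlarge := three_mul_add_seven_le_two_pow (n := d - 1) (by omega)
    omega
  interval_cases d <;> simp_all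
end

section
/- No group H with S_3 ≤ H can be contained in a group isomorphic to A_4 as a subgroup; more precisely, A_4 contains no subgroup of order 6. Consequently, if PSL(2,q)_M ≅ S_3 for a 3-subset M and PSL(2,q)_B ≅ A_4 for the unique block B ⊇ M of an SQS(q+1), then PSL(2,q)_M is not contained in PSL(2,q)_B, contradicting that every automorphism stabilizing M must stabilize the unique block containing M; hence a non-3-homogeneous PSL(2,q) cannot act block-transitively on any SQS(q+1). -/
open Equiv Equiv.Perm

/-! The elements of odd order in a group lie in every subgroup of index 2, since each of them is
a square. In `Aₙ` the 3-cycles are such elements and they generate, so `Aₙ` has no subgroup of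
index 2; in particular `A₄`, of order 12, has no subgroup of order 6, and so cannot contain a copy
of `S₃`. -/

theorem Subgroup.mem_of_index_eq_two_of_pow_odd_eq_one {G : Type*} [Group G] {H : Subgroup G}
    (hH : H.index = 2) {g : G} {n : ℕ} (hn : Odd n) (hg : g ^ n = 1) : g ∈ H := by
  obtain ⟨k, rfl⟩ := hn
  have hsq : (g ^ (k + 1)) ^ 2 = g := by
    rw [← pow_mul, show (k + 1) * 2 = (2 * k + 1) + 1 by ring, pow_succ, hg, one_mul]
  exact hsq ▸ H.sq_mem_of_index_two hH _

theorem Subgroup.exists_card_eq_of_le_of_mulEquiv {G K : Type*} [Group G] [Group K]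
    {A B : Subgroup G} (hAB : A ≤ B) (e : B ≃* K) : ∃ H : Subgroup K, Nat.card H = Nat.card A :=
  ⟨(A.subgroupOf B).map e.toMonoidHom, by
    rw [Subgroup.card_map_of_injective e.injective,
      Nat.card_congr (Subgroup.subgroupOfEquivOfLe hAB).toEquiv]⟩

namespace alternatingGroup

variable {α : Type*} [Fintype α] [DecidableEq α]

theorem index_ne_two (H : Subgroup (alternatingGroup α)) : H.index ≠ 2 := by
  intro hH
  have three_cycle_mem : ∀ σ : Perm α, σ.IsThreeCycle →
      σ ∈ H.map (alternatingGroup α).subtype := fun σ hσ =>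
    ⟨⟨σ, hσ.mem_alternatingGroup⟩,
      H.mem_of_index_eq_two_of_pow_odd_eq_one hH (n := 3) (by decide)
        (Subtype.ext (by simpa [hσ.orderOf] using pow_orderOf_eq_one σ)), rfl⟩
  have hmap : alternatingGroup α ≤ H.map (alternatingGroup α).subtype :=
    (closure_three_cycles_eq_alternating (α := α)).ge.trans
      ((Subgroup.closure_le _).mpr three_cycle_mem)
  have htop : H = ⊤ := by
    refine eq_top_iff.mpr fun x _ => ?_
    obtain ⟨y, hy, hyx⟩ := hmap x.2
    exact Subtype.ext hyx ▸ hy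
  simp [htop] at hH

theorem two_mul_card_ne_card (H : Subgroup (alternatingGroup α)) :
    2 * Nat.card H ≠ Nat.card (alternatingGroup α) := by
  intro h
  have hpos : 0 < Nat.card H := Nat.card_pos
  have := H.index_mul_card
  exact index_ne_two H (by nlinarith)

theorem card_subgroup_fin_four_ne_six (H : Subgroup (alternatingGroup (Fin 4))) :
    Nat.card H ≠ 6 := fun h6 =>
  two_mul_card_ne_card H (by rw [h6, nat_card_alternatingGroup, Nat.card_fin]; rfl)

end alternatingGroup

/-- `A₄` contains no subgroup of order 6; consequently, in any group, a subgroup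
isomorphic to `S₃` can never be contained in a subgroup isomorphic to `A₄`. -/
theorem stmt_16 :
    (∀ H : Subgroup (alternatingGroup (Fin 4)), Nat.card H ≠ 6) ∧
      ∀ (G : Type) [Group G] (A B : Subgroup G),
        Nonempty (A ≃* Equiv.Perm (Fin 3)) →
        Nonempty (B ≃* alternatingGroup (Fin 4)) → ¬ A ≤ B := by
  refine ⟨alternatingGroup.card_subgroup_fin_four_ne_six, ?_⟩
  rintro G _ A B ⟨eS3⟩ ⟨eA4⟩ hAB
  obtain ⟨H, hH⟩ := Subgroup.exists_card_eq_of_le_of_mulEquiv hAB eA4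
  refine alternatingGroup.card_subgroup_fin_four_ne_six H ?_
  rw [hH, Nat.card_congr eS3.toEquiv, Nat.card_perm, Nat.card_fin]
  rfl
end
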